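/- Let P ⊆ ℝ be a finite nonempty set and let m be the minimum number of closed intervals of length 2 whose union contains P. Then there exist points p_1, …, p_m ∈ P such that the intervals [p_1, p_1+2], …, [p_m, p_m+2] are pairwise disjoint and their union contains P. -/
import Mathlib

open Set

noncomputable def NN (P : Finset ℝ) : ℕ :=
  sInf {n | ∃ c : Fin n → ℝ, ↑P ⊆ ⋃ i, Set.Icc (c i) (c i + 2)}

lemma NN_mem (P : Finset ℝ) : ∃ c : Fin (NN P) → ℝ, ↑P ⊆ ⋃ i, Set.Icc (c i) (c i + 2) := by
  have hne : (P.card : ℕ) ∈ {n | ∃ c : Fin n → ℝ, ↑P ⊆ ⋃ i, Set.Icc (c i) (c i + 2)} := by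
    refine ⟨fun i => (P.equivFin.symm i : ℝ), ?_⟩
    intro x hx
    refine Set.mem_iUnion.2 ⟨P.equivFin ⟨x, hx⟩, ?_⟩
    simp only [Equiv.symm_apply_apply]
    exact ⟨le_refl _, by linarith⟩
  exact Nat.sInf_mem ⟨P.card, hne⟩

lemma icc_disj {x y : ℝ} (h : x + 2 < y) :
    Disjoint (Set.Icc x (x + 2)) (Set.Icc y (y + 2)) := by
  rw [Set.disjoint_left]
  intro z hz hz'
  simp only [Set.mem_Icc] at hz hz'
  linarith

lemma NN_step (P : Finset ℝ) (hP : P.Nonempty) :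
    NN P = NN (P.filter (fun x => P.min' hP + 2 < x)) + 1 := by
  set a := P.min' hP with ha
  set P' := P.filter (fun x => a + 2 < x) with hP'
  apply le_antisymm
  · obtain ⟨c, hc⟩ := NN_mem P'
    apply Nat.sInf_le
    refine ⟨Fin.cons a c, ?_⟩
    intro x hx
    by_cases h : a + 2 < x
    · have hx' : x ∈ (P' : Set ℝ) := by
        simp only [hP', Finset.coe_filter, Set.mem_setOf_eq]
        exact ⟨hx, h⟩
      obtain ⟨j, hj⟩ := Set.mem_iUnion.1 (hc hx')
      exact Set.mem_iUnion.2 ⟨j.succ, by simpa using hj⟩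
    · refine Set.mem_iUnion.2 ⟨0, ?_⟩
      simp only [Fin.cons_zero, Set.mem_Icc]
      exact ⟨P.min'_le x hx, by linarith⟩
  · obtain ⟨c, hc⟩ := NN_mem P
    have ham : a ∈ (P : Set ℝ) := P.min'_mem hP
    obtain ⟨i₀, hi₀⟩ := Set.mem_iUnion.1 (hc ham)
    revert c hc i₀ hi₀
    generalize NN P = n
    intro c hc i₀ hi₀
    match n, i₀ with
    | (k + 1), i₀ =>
      have : NN P' ≤ k := by
        apply Nat.sInf_le
        refine ⟨c ∘ i₀.succAbove, ?_⟩
        intro x hx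
        have hxP' : x ∈ P' := hx
        rw [hP', Finset.mem_filter] at hxP'
        obtain ⟨hxP, hax⟩ := hxP'
        obtain ⟨i, hi⟩ := Set.mem_iUnion.1 (hc hxP)
        have hne : i ≠ i₀ := by
          rintro rfl
          simp only [Set.mem_Icc] at hi hi₀
          linarith [hi.2, hi₀.1]
        obtain ⟨j, hj⟩ := Fin.exists_succAbove_eq hne
        refine Set.mem_iUnion.2 ⟨j, ?_⟩
        show x ∈ Set.Icc (c (i₀.succAbove j)) (c (i₀.succAbove j) + 2)
        rw [hj]; exact hi
      omega

lemma main_lemma : ∀ (n : ℕ) (P : Finset ℝ), P.card = n →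
    ∃ p : Fin (NN P) → ℝ, (∀ i, p i ∈ P) ∧
      (∀ i j, i ≠ j → Disjoint (Set.Icc (p i) (p i + 2)) (Set.Icc (p j) (p j + 2))) ∧
      ↑P ⊆ ⋃ i, Set.Icc (p i) (p i + 2) := by
  intro n
  induction n using Nat.strong_induction_on with
  | _ n IH =>
    intro P hcard
    rcases P.eq_empty_or_nonempty with rfl | hP
    · have h0 : NN (∅ : Finset ℝ) ≤ 0 := by
        apply Nat.sInf_le
        exact ⟨Fin.elim0, by simp⟩
      refine ⟨fun _ => 0, ?_, ?_, ?_⟩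
      · exact fun i => absurd i.isLt (by omega)
      · exact fun i _ _ => absurd i.isLt (by omega)
      · simp
    · set a := P.min' hP with ha
      set P' := P.filter (fun x => a + 2 < x) with hP'
      have hN : NN P = NN P' + 1 := NN_step P hP
      have haP : a ∈ P := P.min'_mem hP
      have haP' : a ∉ P' := by
        rw [hP', Finset.mem_filter]
        rintro ⟨-, h⟩; linarith
      have hlt : P'.card < n := by
        rw [← hcard]
        exact Finset.card_lt_card ⟨Finset.filter_subset _ _, fun hsub => haP' (hsub haP)⟩
      obtain ⟨p', h1, h2, h3⟩ := IH P'.card hlt P' rfl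
      have hgt : ∀ j, a + 2 < p' j := by
        intro j
        have := h1 j
        rw [hP', Finset.mem_filter] at this
        exact this.2
      set q : Fin (NN P' + 1) → ℝ := Fin.cons a p' with hq
      have hqdisj : ∀ i j : Fin (NN P' + 1), i ≠ j →
          Disjoint (Set.Icc (q i) (q i + 2)) (Set.Icc (q j) (q j + 2)) := by
        intro i j hij
        rcases Fin.eq_zero_or_eq_succ i with rfl | ⟨i', rfl⟩ <;>
          rcases Fin.eq_zero_or_eq_succ j with rfl | ⟨j', rfl⟩
        · exact absurd rfl hij
        · simpa [hq] using icc_disj (hgt j')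
        · simpa [hq] using (icc_disj (hgt i')).symm
        · have : i' ≠ j' := fun h => hij (by rw [h])
          simpa [hq] using h2 i' j' this
      refine ⟨fun i => q (Fin.cast hN i), ?_, ?_, ?_⟩
      · intro i
        show q (Fin.cast hN i) ∈ P
        rcases Fin.eq_zero_or_eq_succ (Fin.cast hN i) with h | ⟨i', h⟩ <;> rw [h]
        · simpa [hq] using haP
        · simp only [hq, Fin.cons_succ]
          exact Finset.filter_subset _ _ (h1 i')
      · intro i j hij
        apply hqdisj
        intro h
        exact hij (by simpa [Fin.ext_iff] using h)
      · intro x hx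
        by_cases h : a + 2 < x
        · have hx' : x ∈ (P' : Set ℝ) := by
            simp only [hP', Finset.coe_filter, Set.mem_setOf_eq]
            exact ⟨hx, h⟩
          obtain ⟨j, hj⟩ := Set.mem_iUnion.1 (h3 hx')
          refine Set.mem_iUnion.2 ⟨Fin.cast hN.symm j.succ, ?_⟩
          show x ∈ Set.Icc (q (Fin.cast hN (Fin.cast hN.symm j.succ)))
            (q (Fin.cast hN (Fin.cast hN.symm j.succ)) + 2)
          have : Fin.cast hN (Fin.cast hN.symm j.succ) = j.succ := by
            simp [Fin.ext_iff]
          rw [this]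
          simpa [hq] using hj
        · refine Set.mem_iUnion.2 ⟨Fin.cast hN.symm 0, ?_⟩
          show x ∈ Set.Icc (q (Fin.cast hN (Fin.cast hN.symm 0)))
            (q (Fin.cast hN (Fin.cast hN.symm 0)) + 2)
          have : Fin.cast hN (Fin.cast hN.symm 0) = 0 := by
            simp [Fin.ext_iff]
          rw [this]
          simp only [hq, Fin.cons_zero, Set.mem_Icc]
          exact ⟨P.min'_le x hx, by linarith⟩

theorem stmt_14 (P : Finset ℝ) (hP : P.Nonempty)
    (m : ℕ) (hm : m = sInf {n | ∃ c : Fin n → ℝ, ↑P ⊆ ⋃ i, Set.Icc (c i) (c i + 2)}) :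
    ∃ p : Fin m → ℝ, (∀ i, p i ∈ P) ∧
      (∀ i j, i ≠ j → Disjoint (Set.Icc (p i) (p i + 2)) (Set.Icc (p j) (p j + 2))) ∧
      ↑P ⊆ ⋃ i, Set.Icc (p i) (p i + 2) := by
  have : m = NN P := hm
  subst this
  exact main_lemma P.card P rfl
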